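/- arXiv:0809.2293 — 7 statements merged into one kernel-verified Lean document; each statement's English description precedes it below -/
import Mathlib

section
/- Let p be an odd prime and m ≥ 1 a natural number. For every unit x of ZMod (p^m) whose reduction modulo p equals 1, there exists a unique natural number y with 0 ≤ y < p^{m-1} such that (1+p)^y = x in ZMod (p^m). -/
/-!
For odd `p` the unit `1 + p` has order exactly `p ^ (m - 1)` in `ZMod (p ^ m)`, and the kernel of
reduction `(ZMod (p ^ m))ˣ → (ZMod p)ˣ` has `φ (p ^ m) / φ p = p ^ (m - 1)` elements. So the cyclic
group generated by `1 + p` is the whole kernel, and each element of the kernel is `(1 + p) ^ y` for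
exactly one exponent `y` below the order.
-/

theorem existsUnique_lt_orderOf_pow_eq {M : Type*} [Monoid M] {u x : M} (hu : IsOfFinOrder u)
    (hx : x ∈ Submonoid.powers u) : ∃! y, y < orderOf u ∧ u ^ y = x := by
  classical
  obtain ⟨y, hy, rfl⟩ := Finset.mem_image.mp (hu.mem_powers_iff_mem_range_orderOf.mp hx)
  exact ⟨y, ⟨Finset.mem_range.mp hy, rfl⟩,
    fun z hz ↦ pow_injOn_Iio_orderOf hz.1 (Finset.mem_range.mp hy) hz.2⟩

namespace ZMod

theorem card_ker_unitsMap_mul_totient {d n : ℕ} [NeZero n] (h : d ∣ n) :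
    Nat.card (unitsMap h).ker * d.totient = n.totient := by
  have : NeZero d := ⟨ne_zero_of_dvd_ne_zero (NeZero.ne n) h⟩
  rw [← card_units_eq_totient, ← card_units_eq_totient, ← Nat.card_eq_fintype_card,
    ← Nat.card_eq_fintype_card, ← Subgroup.card_mul_index (unitsMap h).ker,
    Subgroup.index_ker, MonoidHom.range_eq_top_of_surjective _ (unitsMap_surjective h),
    Subgroup.card_top]

theorem card_ker_unitsMap_prime_pow {p : ℕ} (hp : p.Prime) (k : ℕ) :
    Nat.card (unitsMap (dvd_pow_self p k.succ_ne_zero)).ker = p ^ k := by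
  have : NeZero (p ^ (k + 1)) := ⟨pow_ne_zero _ hp.ne_zero⟩
  have h := card_ker_unitsMap_mul_totient (dvd_pow_self p k.succ_ne_zero)
  rw [Nat.totient_prime hp, Nat.totient_prime_pow_succ hp] at h
  exact Nat.eq_of_mul_eq_mul_right (Nat.sub_pos_of_lt hp.one_lt) h

theorem isOfFinOrder_one_add_prime {p : ℕ} (hp : p.Prime) (hp2 : p ≠ 2) (k : ℕ) :
    IsOfFinOrder (1 + p : ZMod (p ^ (k + 1))) :=
  orderOf_pos_iff.mp ((orderOf_one_add_prime hp hp2 k).symm ▸ pow_pos hp.pos k)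

theorem mem_powers_one_add_prime_of_mem_ker {p : ℕ} (hp : p.Prime) (hp2 : p ≠ 2) (k : ℕ)
    {x : (ZMod (p ^ (k + 1)))ˣ} (hx : x ∈ (unitsMap (dvd_pow_self p k.succ_ne_zero)).ker) :
    (x : ZMod (p ^ (k + 1))) ∈ Submonoid.powers (1 + p : ZMod (p ^ (k + 1))) := by
  have hfin := isOfFinOrder_one_add_prime hp hp2 k
  have hle : Subgroup.zpowers hfin.unit ≤ (unitsMap (dvd_pow_self p k.succ_ne_zero)).ker := by
    rw [Subgroup.zpowers_le, MonoidHom.mem_ker, Units.ext_iff, unitsMap_val]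
    simp
  have heq := Subgroup.eq_of_le_of_card_ge hle (by
    rw [card_ker_unitsMap_prime_pow hp, Nat.card_zpowers, ← orderOf_units, hfin.val_unit,
      orderOf_one_add_prime hp hp2 k])
  rw [← heq, ← mem_powers_iff_mem_zpowers] at hx
  obtain ⟨n, rfl⟩ := hx
  exact ⟨n, by simp⟩

end ZMod

theorem stmt_4 (p : ℕ) (hp : p.Prime) (hodd : Odd p) (m : ℕ) (hm : 1 ≤ m)
    (x : (ZMod (p ^ m))ˣ)
    (hx : ZMod.castHom (dvd_pow_self p (by omega : m ≠ 0)) (ZMod p)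
        (x : ZMod (p ^ m)) = 1) :
    ∃! y : ℕ, y < p ^ (m - 1) ∧ ((1 + p : ZMod (p ^ m)) ^ y = (x : ZMod (p ^ m))) := by
  obtain ⟨k, rfl⟩ : ∃ k, m = k + 1 := ⟨m - 1, by omega⟩
  have hp2 : p ≠ 2 := hodd.ne_two_of_dvd_nat dvd_rfl
  have hker : x ∈ (ZMod.unitsMap (dvd_pow_self p k.succ_ne_zero)).ker := by
    rwa [MonoidHom.mem_ker, Units.ext_iff, ZMod.unitsMap_val]
  rw [Nat.add_sub_cancel, ← ZMod.orderOf_one_add_prime hp hp2 k]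
  exact existsUnique_lt_orderOf_pow_eq (ZMod.isOfFinOrder_one_add_prime hp hp2 k)
    (ZMod.mem_powers_one_add_prime_of_mem_ker hp hp2 k hker)
end

section
/- Let p be an odd prime and x an integer. In the field ℚ_p of p-adic numbers, let L denote the sum of the convergent series Σ_{i=1}^∞ (-1)^{i+1} (p·x)^i / i. Then the series Σ_{j=0}^∞ L^j / j! converges in ℚ_p and its sum equals 1 + p·x. -/
/-!
Formally, `exp (log (1 + X)) = 1 + X`: since `(1 + X) · log' = 1`, the chain rule gives
`(1 + X) · E' = E` for `E = exp (log (1 + X))`, so `E / (1 + X)` has derivative zero and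
constant term `1`.

Analytically, put `t = p x`, so `‖t‖ ≤ 1/p`. The terms of `log (1 + X)` at `t` are bounded by
`a ρⁿ` with `a = 3/(2p)` and `ρ = 2/3`; by the ultrametric inequality the terms of its `j`-th
power are bounded by `aʲ ρⁿ`, and Legendre's formula gives `‖1/j!‖² ≤ pʲ`, so
`‖1/j!‖ aʲ ≤ (√3/2)ʲ` once `p ≥ 3`. Hence the double series `∑_{j,n} [Xⁿ] logʲ · tⁿ / j!`
converges absolutely. Summed by rows it is `∑ Lʲ/j!`; summed by columns it is the value of
`exp (log (1 + X)) = 1 + X` at `t`.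
-/

open PowerSeries Finset

namespace PowerSeries

theorem coeff_pow_eq_zero_of_lt {R : Type*} [Semiring R] {f : R⟦X⟧} (hf : constantCoeff f = 0)
    {n j : ℕ} (h : n < j) : coeff n (f ^ j) = 0 :=
  coeff_of_lt_order n <| (Nat.cast_lt.2 h).trans_le (le_order_pow_of_constantCoeff_eq_zero j hf)

section Formal

variable {K : Type*} [Field K] [CharZero K]

theorem one_add_X_mul_derivative_log : (1 + X) * d⁄dX K (log K) = 1 := by
  ext n
  rw [deriv_log, add_mul, one_mul, map_add, coeff_one]
  cases n with
  | zero => simp [coeff_zero_eq_constantCoeff]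
  | succ n => simp [coeff_succ_X_mul, pow_succ]

theorem coeff_exp_subst {f : K⟦X⟧} (hf : constantCoeff f = 0) (n : ℕ) :
    coeff n ((exp K).subst f) = ∑ j ∈ range (n + 1), (j.factorial : K)⁻¹ * coeff n (f ^ j) := by
  rw [coeff_subst' (HasSubst.of_constantCoeff_zero' hf),
    finsum_eq_sum_of_support_subset (s := range (n + 1))]
  · simp [smul_eq_mul]
  · intro j hj
    rw [Function.mem_support] at hj
    rw [coe_range, Set.mem_Iio]
    by_contra! h
    exact hj (by rw [coeff_pow_eq_zero_of_lt hf (by omega), smul_zero])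

theorem exp_subst_log : (exp K).subst (log K) = (1 + X : K⟦X⟧) := by
  set E : K⟦X⟧ := (exp K).subst (log K)
  set u : K⟦X⟧ := 1 + X
  have hu : constantCoeff u ≠ 0 := by simp [u]
  have hE : u * d⁄dX K E = E := by
    rw [derivative_subst HasSubst.log, derivative_exp, mul_left_comm,
      one_add_X_mul_derivative_log, mul_one]
  suffices E * u⁻¹ = 1 from ((eq_mul_inv_iff_mul_eq hu).1 this.symm).symm.trans (one_mul u)
  refine derivative.ext ?_ ?_
  · have hinv := PowerSeries.mul_inv_cancel u hu
    rw [Derivation.leibniz, derivative_inv', derivative_one]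
    simp only [u, map_add, derivative_one, derivative_X, zero_add, mul_one, smul_eq_mul]
      at hE hinv ⊢
    linear_combination (1 + X)⁻¹ ^ 2 * hE - (1 + X)⁻¹ * d⁄dX K E * hinv
  · rw [map_mul, map_one, ← coeff_zero_eq_constantCoeff_apply, coeff_exp_subst constantCoeff_log]
    simp [u]

end Formal

theorem coeff_mul_mul_pow {R : Type*} [CommSemiring R] (f g : R⟦X⟧) (t : R) (n : ℕ) :
    coeff n (f * g) * t ^ n =
      ∑ kl ∈ antidiagonal n, (coeff kl.1 f * t ^ kl.1) * (coeff kl.2 g * t ^ kl.2) := by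
  rw [coeff_mul, sum_mul]
  refine sum_congr rfl fun kl hkl => ?_
  rw [← mem_antidiagonal.1 hkl, pow_add]
  ring

theorem hasSum_coeff_one_add_X_mul_pow {R : Type*} [Semiring R] [TopologicalSpace R]
    [ContinuousAdd R] (t : R) : HasSum (fun n => coeff n (1 + X : R⟦X⟧) * t ^ n) (1 + t) := by
  convert hasSum_sum_of_ne_finset_zero (L := .unconditional ℕ) (s := range 2) fun n hn => ?_
  · simp [sum_range_succ]
  · rw [mem_range, not_lt] at hn
    simp [coeff_one, coeff_X, show n ≠ 0 by omega, show n ≠ 1 by omega]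

theorem hasSum_coeff_log_mul_pow_iff {K : Type*} [Field K] [CharZero K] [TopologicalSpace K]
    [IsTopologicalAddGroup K] {t L : K} :
    HasSum (fun n => coeff n (log K) * t ^ n) L ↔
      HasSum (fun i : ℕ => (-1) ^ i * t ^ (i + 1) / (i + 1)) L := by
  rw [← hasSum_nat_add_iff' 1]
  simp only [coeff_log, Nat.add_eq_zero_iff, one_ne_zero, and_false, if_false, range_one,
    sum_singleton, if_true, zero_mul, sub_zero]
  congr! 2 with i
  rw [eq_ratCast]
  push_cast
  ring

theorem hasSum_coeff_mul_mul_pow {R : Type*} [NormedCommRing R] [CompleteSpace R] {f g : R⟦X⟧}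
    {t a b : R} (hf : Summable fun n => ‖coeff n f * t ^ n‖)
    (hg : Summable fun n => ‖coeff n g * t ^ n‖) (ha : HasSum (fun n => coeff n f * t ^ n) a)
    (hb : HasSum (fun n => coeff n g * t ^ n) b) :
    HasSum (fun n => coeff n (f * g) * t ^ n) (a * b) := by
  simp only [coeff_mul_mul_pow]
  rw [← ha.tsum_eq, ← hb.tsum_eq, tsum_mul_tsum_eq_tsum_sum_antidiagonal_of_summable_norm hf hg]
  exact (summable_norm_sum_mul_antidiagonal_of_summable_norm hf hg).of_norm.hasSum

section Ultrametric

variable {K : Type*} [NormedField K] [IsUltrametricDist K] {f g : K⟦X⟧} {t : K} {a b ρ : ℝ}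

theorem norm_coeff_mul_mul_pow_le (hf : ∀ n, ‖coeff n f * t ^ n‖ ≤ a * ρ ^ n)
    (hg : ∀ n, ‖coeff n g * t ^ n‖ ≤ b * ρ ^ n) (n : ℕ) :
    ‖coeff n (f * g) * t ^ n‖ ≤ a * b * ρ ^ n := by
  rw [coeff_mul_mul_pow]
  refine IsUltrametricDist.norm_sum_le_of_forall_le_of_nonempty ⟨(0, n), by simp⟩
    fun kl hkl => ?_
  rw [← mem_antidiagonal.1 hkl, norm_mul, pow_add, mul_mul_mul_comm]
  exact mul_le_mul (hf _) (hg _) (norm_nonneg _) ((norm_nonneg _).trans (hf _))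

theorem norm_coeff_pow_mul_pow_le (hf : ∀ n, ‖coeff n f * t ^ n‖ ≤ a * ρ ^ n) (hρ : 0 ≤ ρ)
    (j n : ℕ) : ‖coeff n (f ^ j) * t ^ n‖ ≤ a ^ j * ρ ^ n := by
  induction j generalizing n with
  | zero =>
    rw [pow_zero, pow_zero, one_mul, coeff_one]
    split_ifs with hn
    · simp [hn]
    · simpa using pow_nonneg hρ n
  | succ j ih =>
    rw [pow_succ', pow_succ']
    exact norm_coeff_mul_mul_pow_le hf ih n

variable [CompleteSpace K]

theorem hasSum_coeff_pow_mul_pow {L : K} (hf : ∀ n, ‖coeff n f * t ^ n‖ ≤ a * ρ ^ n)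
    (hρ0 : 0 ≤ ρ) (hρ1 : ρ < 1) (hL : HasSum (fun n => coeff n f * t ^ n) L) (j : ℕ) :
    HasSum (fun n => coeff n (f ^ j) * t ^ n) (L ^ j) := by
  have hnorm (j : ℕ) : Summable fun n => ‖coeff n (f ^ j) * t ^ n‖ :=
    ((summable_geometric_of_lt_one hρ0 hρ1).mul_left (a ^ j)).of_nonneg_of_le
      (fun _ => norm_nonneg _) (norm_coeff_pow_mul_pow_le hf hρ0 j)
  induction j with
  | zero =>
    convert hasSum_single 0 fun n hn => ?_
    · simp
    · simp [coeff_one, hn]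
  | succ j ih =>
    rw [pow_succ', pow_succ']
    exact hasSum_coeff_mul_mul_pow (by simpa using hnorm 1) (hnorm j) hL ih

theorem hasSum_pow_div_factorial_of_hasSum_coeff_exp_subst [CharZero K]
    (hf0 : constantCoeff f = 0) (hf : ∀ n, ‖coeff n f * t ^ n‖ ≤ a * ρ ^ n) (hρ0 : 0 ≤ ρ)
    (hρ1 : ρ < 1) (hexp : Summable fun j => ‖(j.factorial : K)⁻¹‖ * a ^ j) {L s : K}
    (hL : HasSum (fun n => coeff n f * t ^ n) L)
    (hs : HasSum (fun n => coeff n ((exp K).subst f) * t ^ n) s) :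
    HasSum (fun j => L ^ j / j.factorial) s := by
  have ha : 0 ≤ a := by simpa using (norm_nonneg _).trans (hf 0)
  set Φ : ℕ × ℕ → K := fun q => (q.1.factorial : K)⁻¹ * (coeff q.2 (f ^ q.1) * t ^ q.2)
  have hΦ : Summable Φ := by
    refine Summable.of_norm <| (hexp.mul_of_nonneg (summable_geometric_of_lt_one hρ0 hρ1)
      (fun _ => by positivity) fun _ => pow_nonneg hρ0 _).of_nonneg_of_le
      (fun _ => norm_nonneg _) fun ⟨j, n⟩ => ?_
    rw [norm_mul, mul_assoc]
    exact mul_le_mul_of_nonneg_left (norm_coeff_pow_mul_pow_le hf hρ0 j n) (norm_nonneg _)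
  have hrows : HasSum (fun j => L ^ j / j.factorial) (∑' q, Φ q) :=
    hΦ.hasSum.prod_fiberwise fun j => by
      simpa only [div_eq_inv_mul] using (hasSum_coeff_pow_mul_pow hf hρ0 hρ1 hL j).mul_left _
  have hcols : HasSum (fun n => coeff n ((exp K).subst f) * t ^ n) (∑' q, Φ q) := by
    refine ((Equiv.prodComm ℕ ℕ).hasSum_iff.mpr hΦ.hasSum).prod_fiberwise fun n => ?_
    rw [coeff_exp_subst hf0, sum_mul]
    convert hasSum_sum_of_ne_finset_zero (L := .unconditional ℕ) fun j hj => ?_ using 2 with j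
    · simp [Φ, mul_assoc]
    · rw [mem_range, not_lt] at hj
      simp [Φ, coeff_pow_eq_zero_of_lt hf0 (Nat.lt_of_succ_le hj)]
  rwa [hs.unique hcols]

end Ultrametric

end PowerSeries

theorem natCast_mul_inv_pow_le {P : ℝ} (hP : 3 ≤ P) (n : ℕ) :
    n * P⁻¹ ^ n ≤ 3 / (2 * P) * (2 / 3) ^ n := by
  have hP0 : 0 < P := by linarith
  cases n with
  | zero =>
    simp only [CharP.cast_eq_zero, pow_zero, mul_one]
    positivity
  | succ k =>
    have hk : ((k + 1 : ℕ) : ℝ) ≤ 2 ^ k := by exact_mod_cast Nat.lt_two_pow_self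
    have hP3 : P⁻¹ ≤ 3⁻¹ := inv_anti₀ (by norm_num) hP
    calc ((k + 1 : ℕ) : ℝ) * P⁻¹ ^ (k + 1) ≤ 2 ^ k * 3⁻¹ ^ k * P⁻¹ := by
          rw [pow_succ, ← mul_assoc]
          gcongr
      _ = 3 / (2 * P) * (2 / 3) ^ (k + 1) := by
          rw [← mul_pow]
          field_simp
          ring

namespace Padic

variable {p : ℕ} [Fact p.Prime]

theorem norm_inv_natCast_eq {n : ℕ} (hn : n ≠ 0) :
    ‖(n : ℚ_[p])⁻¹‖ = (p : ℝ) ^ padicValNat p n := by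
  rw [norm_inv, norm_eq_zpow_neg_valuation (Nat.cast_ne_zero.2 hn), valuation_natCast, ← zpow_neg,
    neg_neg, zpow_natCast]

theorem norm_inv_natCast_le (n : ℕ) : ‖(n : ℚ_[p])⁻¹‖ ≤ n := by
  rcases eq_or_ne n 0 with rfl | hn
  · simp
  rw [norm_inv_natCast_eq hn]
  exact_mod_cast Nat.le_of_dvd (Nat.pos_of_ne_zero hn) pow_padicValNat_dvd

theorem norm_inv_factorial_sq_le (hp : 3 ≤ p) (j : ℕ) :
    ‖(j.factorial : ℚ_[p])⁻¹‖ ^ 2 ≤ (p : ℝ) ^ j := by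
  rw [norm_inv_natCast_eq j.factorial_ne_zero, ← pow_mul]
  refine pow_le_pow_right₀ (by exact_mod_cast (Fact.out : p.Prime).one_le) ?_
  rcases eq_or_ne j 0 with rfl | hj
  · simp
  have := sub_one_mul_padicValNat_factorial_lt_of_ne_zero p hj
  have : 2 * padicValNat p j.factorial ≤ (p - 1) * padicValNat p j.factorial :=
    Nat.mul_le_mul_right _ (by omega)
  omega

theorem summable_norm_inv_factorial_mul_pow (hp : 3 ≤ p) :
    Summable fun j => ‖(j.factorial : ℚ_[p])⁻¹‖ * (3 / (2 * p)) ^ j := by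
  have hp' : (3 : ℝ) ≤ p := by exact_mod_cast hp
  have hr : √(3 / 4 : ℝ) < 1 := by rw [Real.sqrt_lt' one_pos]; norm_num
  refine (summable_geometric_of_lt_one (by positivity) hr).of_nonneg_of_le (fun _ => by positivity)
    fun j => ?_
  rw [← pow_le_pow_iff_left₀ (by positivity) (by positivity) two_ne_zero, ← pow_mul, mul_comm j,
    pow_mul, Real.sq_sqrt (by norm_num), mul_pow, ← pow_mul, mul_comm j, pow_mul]
  calc ‖(j.factorial : ℚ_[p])⁻¹‖ ^ 2 * ((3 / (2 * p)) ^ 2) ^ j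
      ≤ (p : ℝ) ^ j * ((3 / (2 * p)) ^ 2) ^ j := by
        gcongr
        exact norm_inv_factorial_sq_le hp j
    _ = (9 / (4 * (p : ℝ))) ^ j := by
        rw [← mul_pow]
        congr 1
        field_simp
        ring
    _ ≤ (3 / 4 : ℝ) ^ j := by
        refine pow_le_pow_left₀ (by positivity) ?_ j
        rw [div_le_div_iff₀ (by positivity) (by norm_num)]
        linarith

theorem norm_coeff_log_le (n : ℕ) : ‖coeff n (log ℚ_[p])‖ ≤ n := by
  rw [coeff_log]
  split_ifs
  · simp
  · simpa [div_eq_mul_inv] using norm_inv_natCast_le (p := p) n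

theorem norm_coeff_log_mul_pow_le (hp : 3 ≤ p) {t : ℚ_[p]} (ht : ‖t‖ ≤ (p : ℝ)⁻¹) (n : ℕ) :
    ‖coeff n (log ℚ_[p]) * t ^ n‖ ≤ 3 / (2 * p) * (2 / 3) ^ n := by
  rw [norm_mul, norm_pow]
  exact (mul_le_mul (norm_coeff_log_le n) (pow_le_pow_left₀ (norm_nonneg t) ht n)
    (by positivity) (Nat.cast_nonneg n)).trans (natCast_mul_inv_pow_le (by exact_mod_cast hp) n)

end Padic

theorem stmt_7 (p : ℕ) [Fact p.Prime] (hodd : Odd p) (x : ℤ) :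
    Summable (fun j : ℕ =>
      (∑' i : ℕ, (-1 : ℚ_[p]) ^ i * ((p : ℚ_[p]) * (x : ℚ_[p])) ^ (i + 1) / ((i : ℚ_[p]) + 1)) ^ j
        / (j.factorial : ℚ_[p])) ∧
    (∑' j : ℕ,
      (∑' i : ℕ, (-1 : ℚ_[p]) ^ i * ((p : ℚ_[p]) * (x : ℚ_[p])) ^ (i + 1) / ((i : ℚ_[p]) + 1)) ^ j
        / (j.factorial : ℚ_[p]))
      = 1 + (p : ℚ_[p]) * (x : ℚ_[p]) := by
  have hp : 3 ≤ p := by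
    obtain ⟨m, rfl⟩ := hodd
    have := (Fact.out : (2 * m + 1).Prime).two_le
    omega
  set t : ℚ_[p] := p * x
  have ht : ‖t‖ ≤ (p : ℝ)⁻¹ := by
    rw [norm_mul, Padic.norm_p]
    exact mul_le_of_le_one_right (by positivity) (Padic.norm_int_le_one x)
  have hbound := Padic.norm_coeff_log_mul_pow_le hp ht
  have hρ0 : (0 : ℝ) ≤ 2 / 3 := by norm_num
  have hρ1 : (2 / 3 : ℝ) < 1 := by norm_num
  have hlog : HasSum (fun n => coeff n (log ℚ_[p]) * t ^ n) (∑' n, coeff n (log ℚ_[p]) * t ^ n) :=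
    (((summable_geometric_of_lt_one hρ0 hρ1).mul_left _).of_nonneg_of_le (fun _ => norm_nonneg _)
      hbound).of_norm.hasSum
  rw [(hasSum_coeff_log_mul_pow_iff.1 hlog).tsum_eq]
  have hexp := hasSum_pow_div_factorial_of_hasSum_coeff_exp_subst constantCoeff_log hbound hρ0
    hρ1 (Padic.summable_norm_inv_factorial_mul_pow hp) hlog
    (exp_subst_log (K := ℚ_[p]) ▸ hasSum_coeff_one_add_X_mul_pow t)
  exact ⟨hexp.summable, hexp.tsum_eq⟩
end

section
/- Let p be a prime, m ≥ 1 a natural number, and f, g polynomials with integer coefficients. If p^{2m} divides f(x) - g(x) for every integer x, then p^m divides f'(x) - g'(x) for every integer x, where f' and g' are the formal derivatives. -/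
open Polynomial

/-- Taylor expansion `d (x + t) = d x + d' x * t + O(t²)` shows that `t² ∣ d' x * t`. -/
theorem Polynomial.dvd_eval_derivative_of_sq_dvd_eval_of_sq_dvd_eval_add {R : Type*} [CommRing R]
    [IsDomain R] {d : R[X]} {x t : R} (ht : t ≠ 0) (h₀ : t ^ 2 ∣ d.eval x)
    (h₁ : t ^ 2 ∣ d.eval (x + t)) : t ∣ d.derivative.eval x := by
  obtain ⟨k, hk⟩ := d.binomExpansion x t
  have hsq : t * t ∣ d.derivative.eval x * t := by
    have hdiff := dvd_sub (dvd_sub h₁ h₀) (dvd_mul_left (t ^ 2) k)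
    rw [hk] at hdiff
    convert hdiff using 1 <;> ring
  exact (mul_dvd_mul_iff_right ht).mp hsq

theorem stmt_11_general (p : ℕ) (hp : p.Prime) (m : ℕ)
    (f g : Polynomial ℤ)
    (h : ∀ x : ℤ, (p : ℤ) ^ (2 * m) ∣ f.eval x - g.eval x) :
    ∀ x : ℤ, (p : ℤ) ^ m ∣ f.derivative.eval x - g.derivative.eval x := by
  intro x
  have hpm : (p : ℤ) ^ m ≠ 0 := pow_ne_zero _ (mod_cast hp.ne_zero)
  have hsq : ((p : ℤ) ^ m) ^ 2 = (p : ℤ) ^ (2 * m) := by rw [← pow_mul, mul_comm]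
  have hfg : ∀ y, ((p : ℤ) ^ m) ^ 2 ∣ (f - g).eval y := fun y => by
    rw [hsq, eval_sub]
    exact h y
  simpa only [derivative_sub, eval_sub] using
    dvd_eval_derivative_of_sq_dvd_eval_of_sq_dvd_eval_add hpm (hfg x) (hfg _)

theorem stmt_11 (p : ℕ) (hp : p.Prime) (m : ℕ) (hm : 1 ≤ m)
    (f g : Polynomial ℤ)
    (h : ∀ x : ℤ, (p : ℤ) ^ (2 * m) ∣ f.eval x - g.eval x) :
    ∀ x : ℤ, (p : ℤ) ^ m ∣ f.derivative.eval x - g.derivative.eval x :=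
  stmt_11_general p hp m f g h
end

section
/- Let p be an odd prime, m ≥ 1 a natural number, and x an integer. Then there exists an integer y with y^p ≡ 1 + p^2·x (mod p^{m+1}), and this y is unique modulo p^m: any two integers y₁, y₂ satisfying y^p ≡ 1 + p^2·x (mod p^{m+1}) satisfy y₁ ≡ y₂ (mod p^m). -/
/-!
Existence: `1 + p x` is a root of `Y ^ p - (1 + p² x)` modulo `p³` (this needs `p` odd), while
the derivative there has valuation exactly `1`, so Hensel's lemma yields an exact `p`-th root in
`ℤ_[p]`, which is then reduced modulo `p ^ (m + 1)`.

Uniqueness: by Fermat every solution is `≡ 1 (mod p)`, so lifting the exponent gives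
`v_p(y₁ ^ p - y₂ ^ p) = v_p(y₁ - y₂) + 1`.
-/

open Polynomial

theorem pow_three_dvd_one_add_mul_pow_sub {R : Type*} [CommRing R] {p : ℕ} (hp : Odd p) (x : R) :
    (p : R) ^ 3 ∣ (1 + p * x) ^ p - (1 + p ^ 2 * x) := by
  obtain ⟨k, hk⟩ := odd_sq_dvd_geom_sum₂_sub (1 : R) x hp
  have hgeom := geom_sum₂_mul (1 + p * x) 1 p
  simp only [one_pow, mul_one] at hk hgeom
  exact ⟨k * x, by linear_combination hgeom.symm + p * x * hk⟩

namespace PadicInt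

variable {p : ℕ} [Fact p.Prime]

theorem norm_one_add_p_mul (x : ℤ_[p]) : ‖1 + p * x‖ = 1 := by
  have hpx : ‖(p * x : ℤ_[p])‖ < 1 := (norm_lt_one_iff_dvd _).mpr (dvd_mul_right _ _)
  rw [norm_add_eq_max_of_ne (by rw [norm_one]; exact hpx.ne'), norm_one, max_eq_left hpx.le]

theorem exists_pow_eq_of_norm_pow_sub_lt {a c : ℤ_[p]} (ha : ‖a‖ = 1)
    (hac : ‖a ^ p - c‖ < ‖(p : ℤ_[p])‖ ^ 2) : ∃ z : ℤ_[p], z ^ p = c := by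
  set F : ℤ_[p][X] := X ^ p - C c
  have hF : ∀ z, aeval z F = z ^ p - c := fun z => by simp [F]
  have hF' : aeval a (derivative F) = p * a ^ (p - 1) := by simp [F, derivative_X_pow]
  obtain ⟨z, hz, -⟩ := hensels_lemma (F := F) (a := a) <| by
    rwa [hF, hF', norm_mul, norm_pow, ha, one_pow, mul_one]
  exact ⟨z, sub_eq_zero.mp (hF z ▸ hz)⟩

theorem exists_pow_eq_one_add_p_sq_mul (hp : Odd p) (x : ℤ_[p]) :
    ∃ z : ℤ_[p], z ^ p = 1 + p ^ 2 * x := by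
  refine exists_pow_eq_of_norm_pow_sub_lt (norm_one_add_p_mul x) ?_
  have hp0 : 0 < ‖(p : ℤ_[p])‖ := by
    rw [norm_p]; exact inv_pos.mpr (Nat.cast_pos.mpr (Fact.out : p.Prime).pos)
  have hp1 : ‖(p : ℤ_[p])‖ < 1 := (norm_lt_one_iff_dvd _).mpr dvd_rfl
  obtain ⟨k, hk⟩ := pow_three_dvd_one_add_mul_pow_sub hp x
  calc ‖(1 + p * x) ^ p - (1 + p ^ 2 * x)‖ = ‖(p : ℤ_[p])‖ ^ 3 * ‖k‖ := by
        rw [hk, norm_mul, norm_pow]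
    _ ≤ ‖(p : ℤ_[p])‖ ^ 3 := mul_le_of_le_one_right (by positivity) (norm_le_one k)
    _ < ‖(p : ℤ_[p])‖ ^ 2 := pow_lt_pow_right_of_lt_one₀ hp0 hp1 (by norm_num)

end PadicInt

theorem exists_intCast_pow_eq_one_add_sq_mul {p : ℕ} [Fact p.Prime] (hp : Odd p) (n : ℕ) (x : ℤ) :
    ∃ y : ℤ, (y : ZMod (p ^ n)) ^ p = 1 + (p : ZMod (p ^ n)) ^ 2 * x := by
  obtain ⟨z, hz⟩ := PadicInt.exists_pow_eq_one_add_p_sq_mul hp (x : ℤ_[p])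
  obtain ⟨y, hy⟩ := ZMod.intCast_surjective (PadicInt.toZModPow n z)
  exact ⟨y, by rw [hy, ← map_pow, hz]; simp⟩

theorem intCast_eq_one_of_pow_eq_one_add_sq_mul {p : ℕ} [Fact p.Prime] {n : ℕ} (hn : n ≠ 0)
    {y x : ℤ} (h : (y : ZMod (p ^ n)) ^ p = 1 + (p : ZMod (p ^ n)) ^ 2 * x) : (y : ZMod p) = 1 := by
  have h' := congrArg (ZMod.castHom (dvd_pow_self p hn) (ZMod p)) h
  simpa only [map_pow, map_add, map_one, map_mul, map_natCast, map_intCast, ZMod.natCast_self,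
    zero_pow two_ne_zero, zero_mul, add_zero, ZMod.pow_card] using h'

theorem Int.pow_dvd_sub_of_pow_succ_dvd_pow_sub_pow {p : ℕ} (hp : p.Prime) (hodd : Odd p)
    {y₁ y₂ : ℤ} {m : ℕ} (hy : (p : ℤ) ∣ y₁ - y₂) (hy₁ : ¬(p : ℤ) ∣ y₁)
    (h : (p : ℤ) ^ (m + 1) ∣ y₁ ^ p - y₂ ^ p) : (p : ℤ) ^ m ∣ y₁ - y₂ := by
  rw [pow_dvd_iff_le_emultiplicity, emultiplicity_pow_prime_sub_pow_prime
    (Nat.prime_iff_prime_int.mp hp) hodd hy hy₁, Nat.cast_add, Nat.cast_one] at h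
  exact pow_dvd_iff_le_emultiplicity.mpr (ENat.add_le_add_iff_right ENat.one_ne_top |>.mp h)

theorem stmt_13_general (p : ℕ) (hp : p.Prime) (hodd : Odd p) (m : ℕ) (x : ℤ) :
    (∃ y : ℤ, (y : ZMod (p ^ (m + 1))) ^ p = 1 + (p : ZMod (p ^ (m + 1))) ^ 2 * (x : ZMod (p ^ (m + 1)))) ∧
    (∀ y₁ y₂ : ℤ,
      (y₁ : ZMod (p ^ (m + 1))) ^ p = 1 + (p : ZMod (p ^ (m + 1))) ^ 2 * (x : ZMod (p ^ (m + 1))) →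
      (y₂ : ZMod (p ^ (m + 1))) ^ p = 1 + (p : ZMod (p ^ (m + 1))) ^ 2 * (x : ZMod (p ^ (m + 1))) →
      (y₁ : ZMod (p ^ m)) = (y₂ : ZMod (p ^ m))) := by
  have := Fact.mk hp
  refine ⟨exists_intCast_pow_eq_one_add_sq_mul hodd (m + 1) x, fun y₁ y₂ h₁ h₂ => ?_⟩
  have hy₁ := intCast_eq_one_of_pow_eq_one_add_sq_mul m.succ_ne_zero h₁
  have hy₂ := intCast_eq_one_of_pow_eq_one_add_sq_mul m.succ_ne_zero h₂
  have hpow : ((p ^ (m + 1) : ℕ) : ℤ) ∣ y₂ ^ p - y₁ ^ p :=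
    (ZMod.intCast_eq_intCast_iff_dvd_sub _ _ _).mp (by push_cast; rw [h₁, h₂])
  rw [ZMod.intCast_eq_intCast_iff_dvd_sub]
  push_cast at hpow ⊢
  refine Int.pow_dvd_sub_of_pow_succ_dvd_pow_sub_pow hp hodd ?_ ?_ hpow
  · exact (ZMod.intCast_eq_intCast_iff_dvd_sub _ _ _).mp (hy₁.trans hy₂.symm)
  · rw [← ZMod.intCast_zmod_eq_zero_iff_dvd, hy₂]
    exact one_ne_zero

theorem stmt_13 (p : ℕ) (hp : p.Prime) (hodd : Odd p) (m : ℕ) (hm : 1 ≤ m) (x : ℤ) :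
    (∃ y : ℤ, (y : ZMod (p ^ (m + 1))) ^ p = 1 + (p : ZMod (p ^ (m + 1))) ^ 2 * (x : ZMod (p ^ (m + 1)))) ∧
    (∀ y₁ y₂ : ℤ,
      (y₁ : ZMod (p ^ (m + 1))) ^ p = 1 + (p : ZMod (p ^ (m + 1))) ^ 2 * (x : ZMod (p ^ (m + 1))) →
      (y₂ : ZMod (p ^ (m + 1))) ^ p = 1 + (p : ZMod (p ^ (m + 1))) ^ 2 * (x : ZMod (p ^ (m + 1))) →
      (y₁ : ZMod (p ^ m)) = (y₂ : ZMod (p ^ m))) :=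
  stmt_13_general p hp hodd m x
end

section
/- Let p be a prime and define I : ZMod p → ZMod p → ZMod p by I(t, x) = -Σ_{i=0}^{p-2} x^{p-1-i} · t^{i+1} · (i+1)⁻¹, where (i+1)⁻¹ is the inverse of the image of i+1 in ZMod p. Then for all t, x in ZMod p, I(t, x) = -I(x, t). -/
/-! Reversing the order of summation `i ↦ p - 2 - i` swaps the roles of `t` and `x` and turns
the weight `(i + 1)⁻¹` into `(p - 1 - i)⁻¹ = -(i + 1)⁻¹`, since `p - 1 - i ≡ -(i + 1)` mod `p`. -/

/-- The modular integration kernel `I(t, x) = -∑_{i=0}^{p-2} x^(p-1-i) t^(i+1) (i+1)⁻¹`. -/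
def modularKernel (p : ℕ) (t x : ZMod p) : ZMod p :=
  -∑ i ∈ Finset.range (p - 1), x ^ (p - 1 - i) * t ^ (i + 1) * ((i : ZMod p) + 1)⁻¹

theorem ZMod.natCast_eq_neg_of_add_eq {n a b : ℕ} (h : a + b = n) : (a : ZMod n) = -b := by
  rw [eq_neg_iff_add_eq_zero, ← Nat.cast_add, h, ZMod.natCast_self]

theorem ZMod.natCast_add_one_eq_neg_of_add_eq {n i j : ℕ} (h : j + i + 2 = n) :
    (j : ZMod n) + 1 = -((i : ZMod n) + 1) := by
  exact_mod_cast ZMod.natCast_eq_neg_of_add_eq (a := j + 1) (b := i + 1) (by omega)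

theorem stmt_14 (p : ℕ) (hp : p.Prime) (t x : ZMod p) :
    modularKernel p t x = -modularKernel p x t := by
  have : Fact p.Prime := ⟨hp⟩
  unfold modularKernel
  rw [neg_neg, ← Finset.sum_range_reflect, ← Finset.sum_neg_distrib]
  refine Finset.sum_congr rfl fun i hi => ?_
  have hi : i < p - 1 := Finset.mem_range.mp hi
  rw [show p - 1 - (p - 1 - 1 - i) = i + 1 by omega, show p - 1 - 1 - i + 1 = p - 1 - i by omega,
    ZMod.natCast_add_one_eq_neg_of_add_eq (by omega : p - 1 - 1 - i + i + 2 = p), inv_neg]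
  ring
end

section
/- Let p be a prime and let f be a polynomial with coefficients in ZMod p of degree at most p-2. Then for every x in ZMod p, the value of the formal derivative of f at x satisfies f'(x) = -Σ_{t ∈ ZMod p} f(t) · (t - x)^{p-2}, the sum being over all p elements t of ZMod p. -/
/-!
Write `f = f(x) + (X - x) g` with `g = f /ₘ (X - x)`, so that `f'(x) = g(x)`. Over a field with
`q` elements, `(t - x)^(q-1)` is the indicator of `t ≠ x`, and `∑ₜ h(t) = 0` whenever
`deg h < q - 1`. Hence `∑ₜ f(t) (t - x)^(q-2) = ∑ₜ g(t) (t - x)^(q-1) + f(x) ∑ₜ (t - x)^(q-2)`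
equals `(∑ₜ g(t) - g(x)) + 0 = -g(x)`.
-/

open Polynomial

namespace FiniteField

variable {K : Type*} [Field K] [Fintype K]

theorem sum_eval_eq_zero_of_natDegree_lt (h : K[X]) (hh : h.natDegree < Fintype.card K - 1) :
    ∑ t : K, h.eval t = 0 := by
  simp_rw [eval_eq_sum_range]
  rw [Finset.sum_comm]
  refine Finset.sum_eq_zero fun i hi => ?_
  rw [← Finset.mul_sum, sum_pow_lt_card_sub_one K i (by grind), mul_zero]

theorem sum_sub_pow_card_sub_two (x : K) : ∑ t : K, (t - x) ^ (Fintype.card K - 2) = 0 := by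
  have hq : 1 < Fintype.card K := Fintype.one_lt_card
  have h := sum_eval_eq_zero_of_natDegree_lt ((X - C x) ^ (Fintype.card K - 2))
    (by rw [natDegree_pow, natDegree_X_sub_C]; omega)
  simpa only [eval_pow, eval_sub, eval_X, eval_C] using h

theorem sum_eval_mul_sub_pow_card_sub_one (g : K[X]) (x : K) :
    ∑ t : K, g.eval t * (t - x) ^ (Fintype.card K - 1) = ∑ t : K, g.eval t - g.eval x := by
  classical
  have hq : 1 < Fintype.card K := Fintype.one_lt_card
  have hterm (t : K) : g.eval t * (t - x) ^ (Fintype.card K - 1) =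
      g.eval t - if t = x then g.eval x else 0 := by
    rcases eq_or_ne t x with rfl | hne
    · simp [zero_pow (by omega : Fintype.card K - 1 ≠ 0)]
    · simp [pow_card_sub_one_eq_one _ (sub_ne_zero_of_ne hne), hne]
  simp_rw [hterm, Finset.sum_sub_distrib, Finset.sum_ite_eq', Finset.mem_univ, if_true]

theorem eval_derivative_eq_neg_sum_eval_mul_sub_pow (f : K[X])
    (hf : f.natDegree ≤ Fintype.card K - 2) (x : K) :
    f.derivative.eval x = -∑ t : K, f.eval t * (t - x) ^ (Fintype.card K - 2) := by
  have hq : 1 < Fintype.card K := Fintype.one_lt_card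
  set g := f /ₘ (X - C x)
  have hg : g.natDegree < Fintype.card K - 1 := by
    rw [natDegree_divByMonic f (monic_X_sub_C x), natDegree_X_sub_C]; omega
  have hderiv : f.derivative.eval x = g.eval x := by
    simpa using congrArg (eval x)
      (divByMonic_add_X_sub_C_mul_derivative_divByMonic_eq_derivative f x).symm
  have hterm (t : K) : f.eval t * (t - x) ^ (Fintype.card K - 2) =
      g.eval t * (t - x) ^ (Fintype.card K - 1) + f.eval x * (t - x) ^ (Fintype.card K - 2) := by
    have hf_eq : (t - x) * g.eval t = f.eval t - f.eval x := by
      simpa [modByMonic_X_sub_C_eq_C_eval] using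
        congrArg (eval t) (X_sub_C_mul_divByMonic_eq_sub_modByMonic f x)
    rw [show Fintype.card K - 1 = Fintype.card K - 2 + 1 by omega, pow_succ]
    linear_combination -(t - x) ^ (Fintype.card K - 2) * hf_eq
  simp_rw [hterm, Finset.sum_add_distrib, ← Finset.mul_sum, sum_sub_pow_card_sub_two,
    sum_eval_mul_sub_pow_card_sub_one, sum_eval_eq_zero_of_natDegree_lt g hg]
  simp [hderiv]

end FiniteField

theorem stmt_15 (p : ℕ) [Fact p.Prime] (f : Polynomial (ZMod p))
    (hf : f.degree ≤ (p - 2 : ℕ)) (x : ZMod p) :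
    f.derivative.eval x = -∑ t : ZMod p, f.eval t * (t - x) ^ (p - 2) := by
  simpa [ZMod.card] using
    FiniteField.eval_derivative_eq_neg_sum_eval_mul_sub_pow f
      (by rwa [ZMod.card, natDegree_le_iff_degree_le]) x
end

section
/- Let p be a prime, let I : ZMod p → ZMod p → ZMod p be defined by I(t, x) = -Σ_{i=0}^{p-2} x^{p-1-i} · t^{i+1} · (i+1)⁻¹, and let f = Σ_{j=0}^{p-2} c_j X^j be a polynomial over ZMod p of degree at most p-2. Then for every t in ZMod p, Σ_{x ∈ ZMod p} f(x) · I(t, x) = Σ_{j=0}^{p-2} c_j · t^{j+1} · (j+1)⁻¹; that is, the sum Σ_x f(x) I(t,x) equals the formal antiderivative of f, normalized to vanish at 0, evaluated at t. -/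
/-!
Over a field with `q` elements, `∑ₓ xᵉ` (for `e ≠ 0`) is `-1` when `q - 1 ∣ e` and `0` otherwise.
For `i, j < q - 1` the exponent `j + (q - 1 - i)` is a multiple of `q - 1` only when `i = j`, so the
monomials `xʲ` and `x^(q-1-i)` are orthogonal up to the factor `-1`. Pairing `f` against the kernel
therefore picks out `cⱼ · t^(j+1) (j+1)⁻¹` for each `j`.
-/

open Finset

theorem Nat.dvd_add_sub_iff_eq {n i j : ℕ} (hi : i < n) (hj : j < n) :
    n ∣ j + (n - i) ↔ i = j := by
  refine ⟨fun ⟨k, hk⟩ => ?_, fun h => ⟨1, by omega⟩⟩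
  rcases k with _ | _ | k
  · omega
  · omega
  · have : j + (n - i) < 2 * n := by omega
    nlinarith

namespace FiniteField

variable {K : Type*} [Field K] [Fintype K]

local notation "q" => Fintype.card K

theorem sum_pow_of_ne_zero {e : ℕ} (he : e ≠ 0) :
    ∑ x : K, x ^ e = if q - 1 ∣ e then -1 else 0 := by
  classical
  rw [← sum_pow_units K e]
  symm
  exact Finset.sum_bij_ne_zero (fun u _ _ => (u : K)) (by simp)
    (fun _ _ _ _ _ _ h => Units.ext h)
    (fun x _ hx => ⟨Units.mk0 x (by rintro rfl; simp [he] at hx), mem_univ _, by simpa using hx, rfl⟩)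
    (by simp)

theorem sum_pow_mul_pow_card_sub_one_sub {i j : ℕ} (hi : i < q - 1) (hj : j < q - 1) :
    ∑ x : K, x ^ j * x ^ (q - 1 - i) = if i = j then -1 else 0 := by
  simp only [← pow_add, sum_pow_of_ne_zero (by omega : j + (q - 1 - i) ≠ 0), Nat.dvd_add_sub_iff_eq hi hj]

theorem sum_mul_sum_pow_card_sub_one_sub (c a : ℕ → K) :
    ∑ x : K, (∑ j ∈ range (q - 1), c j * x ^ j) * (∑ i ∈ range (q - 1), x ^ (q - 1 - i) * a i)
      = -∑ j ∈ range (q - 1), c j * a j := by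
  calc _ = ∑ j ∈ range (q - 1), ∑ i ∈ range (q - 1),
          c j * a i * ∑ x : K, x ^ j * x ^ (q - 1 - i) := by
        simp_rw [sum_mul_sum, mul_sum]
        rw [sum_comm]
        refine sum_congr rfl fun j _ => ?_
        rw [sum_comm]
        refine sum_congr rfl fun i _ => sum_congr rfl fun x _ => by ring
    _ = ∑ j ∈ range (q - 1), ∑ i ∈ range (q - 1), c j * a i * if i = j then -1 else 0 := by
        refine sum_congr rfl fun j hj => sum_congr rfl fun i hi => ?_
        rw [sum_pow_mul_pow_card_sub_one_sub (mem_range.1 hi) (mem_range.1 hj)]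
    _ = ∑ j ∈ range (q - 1), -(c j * a j) :=
        sum_congr rfl fun j hj => by simp [mul_ite, sum_ite_eq', hj]
    _ = _ := sum_neg_distrib _

end FiniteField

theorem stmt_16 (p : ℕ) [Fact p.Prime] (c : ℕ → ZMod p) (t : ZMod p) :
    ∑ x : ZMod p, (∑ j ∈ Finset.range (p - 1), c j * x ^ j) * modularKernel p t x
      = ∑ j ∈ Finset.range (p - 1), c j * t ^ (j + 1) * ((j : ZMod p) + 1)⁻¹ := by
  have h := FiniteField.sum_mul_sum_pow_card_sub_one_sub c
    fun i => t ^ (i + 1) * ((i : ZMod p) + 1)⁻¹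
  simp only [ZMod.card] at h
  simp only [modularKernel, mul_neg, sum_neg_distrib, mul_assoc, h, neg_neg]
end
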